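/- Let X be a proper geodesic metric space and D > 0. Then there exists E = E(D) > D with the following property: if γ is a D-contracting geodesic and x, y are points in the D-neighborhood of γ, then any geodesic segment [x,y] is E-contracting and lies in the E-neighborhood of γ. -/

import Mathlib

open Metric Set

variable {X : Type*} [MetricSpace X]

/-- Nearest-point projection of the point `x` to the set `A`. -/
noncomputable def proj (A : Set X) (x : X) : Set X :=
  {a | a ∈ A ∧ dist x a = infDist x A}

/-- Nearest-point projection of the set `B` to the set `A`. -/
noncomputable def projSet (A B : Set X) : Set X := ⋃ x ∈ B, proj A x

/-- Distance between two subsets of a metric space. -/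
noncomputable def setDist (A B : Set X) : ℝ := sInf (Set.image2 dist A B)

/-- `γ` is a geodesic segment from `x` to `y` (image of a unit-speed parameterization). -/
def IsGeodesicSeg (γ : Set X) (x y : X) : Prop :=
  ∃ (f : ℝ → X) (L : ℝ), 0 ≤ L ∧
    (∀ s ∈ Icc 0 L, ∀ t ∈ Icc 0 L, dist (f s) (f t) = |s - t|) ∧
    f 0 = x ∧ f L = y ∧ γ = f '' Icc 0 L

/-- `γ` is a geodesic segment. -/
def IsGeodesic (γ : Set X) : Prop := ∃ x y, IsGeodesicSeg γ x y

/-- `γ` is `D`-contracting: any geodesic at distance `> D` from `γ`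
projects onto `γ` with diameter `< D`. -/
def IsContractingSet (D : ℝ) (γ : Set X) : Prop :=
  ∀ κ : Set X, IsGeodesic κ → D < setDist γ κ → diam (projSet γ κ) < D

/-- `X` is a geodesic metric space. -/
def GeodesicSpace (X : Type*) [MetricSpace X] : Prop :=
  ∀ x y : X, ∃ γ : Set X, IsGeodesicSeg γ x y

/-! ### Basic helper lemmas -/

/-- Isometric parametrization on `[0,T]`. -/
def IsomOn (f : ℝ → X) (T : ℝ) : Prop :=
  ∀ s ∈ Icc (0:ℝ) T, ∀ t ∈ Icc (0:ℝ) T, dist (f s) (f t) = |s - t|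

lemma le_infDist' {A : Set X} (hA : A.Nonempty) {x : X} {c : ℝ}
    (h : ∀ a ∈ A, c ≤ dist x a) : c ≤ infDist x A := by
  by_contra hc
  push_neg at hc
  rcases (infDist_lt_iff hA).1 hc with ⟨y, hy, hlt⟩
  exact absurd (h y hy) (not_le.2 hlt)

lemma IsomOn.continuousOn {f : ℝ → X} {T : ℝ} (hf : IsomOn f T) :
    ContinuousOn f (Icc 0 T) := by
  refine (LipschitzOnWith.of_dist_le_mul (K := 1) ?_).continuousOn
  intro s hs t ht
  rw [hf s hs t ht, Real.dist_eq]
  simp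

lemma IsomOn.sub {f : ℝ → X} {T s t : ℝ} (hf : IsomOn f T)
    (h0 : 0 ≤ s) (hst : s ≤ t) (hT : t ≤ T) :
    IsomOn (fun r => f (s + r)) (t - s) ∧
      (fun r => f (s + r)) '' Icc 0 (t - s) = f '' Icc s t := by
  constructor
  · intro a ha b hb
    have h1 : s + a ∈ Icc 0 T := ⟨by linarith [ha.1], by linarith [ha.2]⟩
    have h2 : s + b ∈ Icc 0 T := ⟨by linarith [hb.1], by linarith [hb.2]⟩
    rw [hf _ h1 _ h2]
    congr 1; ring
  · rw [show Icc s t = (fun r => s + r) '' Icc 0 (t - s) by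
      rw [image_const_add_Icc]; congr 1 <;> ring]
    rw [image_image]

lemma IsomOn.rev {f : ℝ → X} {T : ℝ} (hf : IsomOn f T) (hT : 0 ≤ T) :
    IsomOn (fun r => f (T - r)) T ∧
      (fun r => f (T - r)) '' Icc 0 T = f '' Icc 0 T := by
  constructor
  · intro a ha b hb
    have h1 : T - a ∈ Icc 0 T := ⟨by linarith [ha.2], by linarith [ha.1]⟩
    have h2 : T - b ∈ Icc 0 T := ⟨by linarith [hb.2], by linarith [hb.1]⟩
    rw [hf _ h1 _ h2]
    rw [abs_sub_comm]; congr 1; ring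
  · ext p
    constructor
    · rintro ⟨r, hr, rfl⟩
      exact ⟨T - r, ⟨by linarith [hr.2], by linarith [hr.1]⟩, rfl⟩
    · rintro ⟨r, hr, rfl⟩
      exact ⟨T - r, ⟨by linarith [hr.2], by linarith [hr.1]⟩,
        by show f (T - (T - r)) = f r; rw [show T - (T - r) = r by ring]⟩

lemma isGeodesicSeg_of_isomOn {f : ℝ → X} {T : ℝ} (hf : IsomOn f T) (hT : 0 ≤ T) :
    IsGeodesicSeg (f '' Icc 0 T) (f 0) (f T) :=
  ⟨f, T, hT, hf, rfl, rfl, rfl⟩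

lemma isGeodesic_sub {f : ℝ → X} {T s t : ℝ} (hf : IsomOn f T)
    (h0 : 0 ≤ s) (hst : s ≤ t) (hT : t ≤ T) : IsGeodesic (f '' Icc s t) := by
  obtain ⟨h1, h2⟩ := hf.sub h0 hst hT
  exact ⟨_, _, h2 ▸ isGeodesicSeg_of_isomOn h1 (by linarith)⟩

lemma isGeodesic_singleton (x : X) : IsGeodesic ({x} : Set X) := by
  refine ⟨x, x, fun _ => x, 0, le_refl 0, ?_, rfl, rfl, ?_⟩
  · intro s hs t ht
    have : s = 0 := le_antisymm hs.2 hs.1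
    have h' : t = 0 := le_antisymm ht.2 ht.1
    simp [this, h']
  · simp

lemma IsomOn.compact_image {f : ℝ → X} {T : ℝ} (hf : IsomOn f T) :
    IsCompact (f '' Icc 0 T) :=
  isCompact_Icc.image_of_continuousOn hf.continuousOn

lemma image_nonempty {f : ℝ → X} {T : ℝ} (hT : 0 ≤ T) :
    (f '' Icc 0 T).Nonempty :=
  ⟨f 0, mem_image_of_mem f (left_mem_Icc.2 hT)⟩

lemma proj_nonempty {A : Set X} (hc : IsCompact A) (hne : A.Nonempty) (x : X) :
    ∃ p, p ∈ proj A x := by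
  rcases hc.exists_infDist_eq_dist hne x with ⟨y, hy, h⟩
  exact ⟨y, hy, h.symm⟩

lemma proj_mem {A : Set X} {x p : X} (h : p ∈ proj A x) : p ∈ A := h.1

lemma proj_dist {A : Set X} {x p : X} (h : p ∈ proj A x) : dist x p = infDist x A := h.2

lemma mem_projSet {A B : Set X} {x p : X} (hx : x ∈ B) (h : p ∈ proj A x) :
    p ∈ projSet A B := by
  exact mem_biUnion hx h

lemma projSet_subset {A B : Set X} : projSet A B ⊆ A := by
  intro p hp
  rcases mem_iUnion₂.1 hp with ⟨x, _, h⟩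
  exact h.1

lemma setDist_le_dist {A B : Set X} {a b : X} (ha : a ∈ A) (hb : b ∈ B) :
    setDist A B ≤ dist a b :=
  csInf_le ⟨0, by rintro r ⟨u, hu, v, hv, rfl⟩; exact dist_nonneg⟩
    (mem_image2_of_mem ha hb)

lemma le_setDist {A B : Set X} {c : ℝ} (hA : A.Nonempty) (hB : B.Nonempty)
    (h : ∀ a ∈ A, ∀ b ∈ B, c ≤ dist a b) : c ≤ setDist A B := by
  refine le_csInf (hA.image2 hB) ?_
  rintro r ⟨u, hu, v, hv, rfl⟩
  exact h u hu v hv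

/-- Wrapper: applying contraction to a subsegment whose points are all far from `A`. -/
lemma contr_apply {A : Set X} {D₀ : ℝ} (hA : IsContractingSet D₀ A)
    (hAne : A.Nonempty) (hAc : IsCompact A)
    {f : ℝ → X} {T s t : ℝ} (hf : IsomOn f T) (h0 : 0 ≤ s) (hst : s ≤ t) (hT : t ≤ T)
    (hfar : ∀ u ∈ Icc s t, D₀ < infDist (f u) A)
    {p q : X} (hp : p ∈ projSet A (f '' Icc s t)) (hq : q ∈ projSet A (f '' Icc s t)) :
    dist p q < D₀ := by
  have hgeo := isGeodesic_sub hf h0 hst hT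
  have hcont : ContinuousOn (fun u => infDist (f u) A) (Icc s t) := by
    refine (continuous_infDist_pt A).comp_continuousOn ?_
    exact hf.continuousOn.mono (fun u hu => ⟨le_trans h0 hu.1, le_trans hu.2 hT⟩)
  obtain ⟨u₀, hu₀, hmin⟩ := isCompact_Icc.exists_isMinOn (nonempty_Icc.2 hst) hcont
  have hsd : D₀ < setDist A (f '' Icc s t) := by
    refine lt_of_lt_of_le (hfar u₀ hu₀) ?_
    refine le_setDist hAne ((nonempty_Icc.2 hst).image f) ?_
    rintro a ha b ⟨u, hu, rfl⟩
    calc infDist (f u₀) A ≤ infDist (f u) A := hmin hu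
      _ ≤ dist (f u) a := infDist_le_dist_of_mem ha
      _ = dist a (f u) := dist_comm _ _
  have hdiam := hA _ hgeo hsd
  have hbd : Bornology.IsBounded (projSet A (f '' Icc s t)) :=
    hAc.isBounded.subset projSet_subset
  exact lt_of_le_of_lt (dist_le_diam_of_mem hbd hp hq) hdiam
/-- Entry lemma: walking along a geodesic towards the region near `A`, the
projection moves at most `3 D₀` until the first entry point. -/
lemma entry {A : Set X} {D₀ : ℝ} (hD₀ : 0 < D₀) (hA : IsContractingSet D₀ A)
    (hAne : A.Nonempty) (hAc : IsCompact A)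
    {f : ℝ → X} {T : ℝ} (hf : IsomOn f T) (hT : 0 ≤ T)
    (hend : infDist (f T) A ≤ D₀) {g : X} (hg : g ∈ proj A (f 0)) :
    ∃ u ∈ Icc (0:ℝ) T, infDist (f u) A ≤ D₀ ∧
      ∃ g' ∈ proj A (f u), dist g g' ≤ 3 * D₀ := by
  set φ : ℝ → ℝ := fun t => infDist (f t) A with hφ
  have hφc : ContinuousOn φ (Icc 0 T) :=
    (continuous_infDist_pt A).comp_continuousOn hf.continuousOn
  set S : Set ℝ := Icc 0 T ∩ φ ⁻¹' Iic D₀ with hS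
  have hScl : IsClosed S := hφc.preimage_isClosed_of_isClosed isClosed_Icc isClosed_Iic
  have hSne : S.Nonempty := ⟨T, right_mem_Icc.2 hT, hend⟩
  have hSbd : BddBelow S := ⟨0, fun r hr => hr.1.1⟩
  set u := sInf S with hu
  have huS : u ∈ S := hScl.csInf_mem hSne hSbd
  have huIcc : u ∈ Icc (0:ℝ) T := huS.1
  have hufar : ∀ t ∈ Ico (0:ℝ) u, D₀ < infDist (f t) A := by
    intro t ht
    by_contra hc
    push_neg at hc
    have : t ∈ S := ⟨⟨ht.1, le_trans (le_of_lt ht.2) huIcc.2⟩, hc⟩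
    exact absurd (csInf_le hSbd this) (not_le.2 ht.2)
  obtain ⟨g', hg'⟩ := proj_nonempty hAc hAne (f u)
  refine ⟨u, huIcc, huS.2, g', hg', ?_⟩
  rcases eq_or_lt_of_le huIcc.1 with h0 | h0
  · -- u = 0
    have : f u = f 0 := by rw [← h0]
    rw [this] at hg'
    calc dist g g' ≤ dist (f 0) g + dist (f 0) g' := dist_triangle_left _ _ _
      _ = infDist (f 0) A + infDist (f 0) A := by rw [hg.2, hg'.2]
      _ ≤ D₀ + D₀ := by
          have h3 : infDist (f u) A ≤ D₀ := huS.2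
          have h2 : infDist (f 0) A ≤ D₀ := by rwa [← h0] at h3
          linarith
      _ ≤ 3 * D₀ := by linarith
  · -- u > 0
    have key : ∀ ε : ℝ, 0 < ε → ε < u → dist g g' ≤ 3 * D₀ + 2 * ε := by
      intro ε hε hεu
      have h1 : (0:ℝ) ≤ u - ε := by linarith
      have h2 : u - ε ≤ T := by linarith [huIcc.2]
      obtain ⟨gε, hgε⟩ := proj_nonempty hAc hAne (f (u - ε))
      have hfar' : ∀ r ∈ Icc (0:ℝ) (u - ε), D₀ < infDist (f r) A := by
        intro r hr
        exact hufar r ⟨hr.1, by linarith [hr.2]⟩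
      have hpg : g ∈ projSet A (f '' Icc 0 (u - ε)) :=
        mem_projSet (mem_image_of_mem f (left_mem_Icc.2 h1)) hg
      have hpgε : gε ∈ projSet A (f '' Icc 0 (u - ε)) :=
        mem_projSet (mem_image_of_mem f (right_mem_Icc.2 h1)) hgε
      have hlt : dist g gε < D₀ :=
        contr_apply hA hAne hAc hf le_rfl h1 h2 hfar' hpg hpgε
      have hd1 : dist (f (u - ε)) gε = infDist (f (u - ε)) A := hgε.2
      have hd2 : infDist (f (u - ε)) A ≤ infDist (f u) A + ε := by
        refine le_trans (infDist_le_infDist_add_dist (y := f u)) ?_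
        have : dist (f (u - ε)) (f u) = ε := by
          rw [hf _ ⟨h1, h2⟩ _ huIcc]
          rw [abs_of_nonpos (by linarith)]; ring
        rw [this]
      have hd3 : dist (f (u - ε)) (f u) = ε := by
        rw [hf _ ⟨h1, h2⟩ _ huIcc]
        rw [abs_of_nonpos (by linarith)]; ring
      calc dist g g' ≤ dist g gε + dist gε (f (u - ε)) + dist (f (u - ε)) g' :=
            dist_triangle4 _ _ _ _
        _ ≤ D₀ + (D₀ + ε) + (ε + dist (f u) g') := by
            have e1 : dist gε (f (u - ε)) = infDist (f (u - ε)) A := by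
              rw [dist_comm]; exact hd1
            have e2 : dist (f (u - ε)) g' ≤ dist (f (u - ε)) (f u) + dist (f u) g' :=
              dist_triangle _ _ _
            have e3 : infDist (f u) A ≤ D₀ := huS.2
            rw [e1]
            have := hd2
            nlinarith [hlt, e2, hd3, e3]
        _ ≤ D₀ + (D₀ + ε) + (ε + D₀) := by
            have e4 : dist (f u) g' = infDist (f u) A := hg'.2
            have e3 : infDist (f u) A ≤ D₀ := huS.2
            rw [e4]; linarith
        _ = 3 * D₀ + 2 * ε := by ring
    refine le_of_forall_pos_le_add ?_
    intro ε hε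
    have hε' : 0 < min (ε / 2) (u / 2) := lt_min (by linarith) (by linarith)
    have hεu : min (ε / 2) (u / 2) < u := lt_of_le_of_lt (min_le_right _ _) (by linarith)
    calc dist g g' ≤ 3 * D₀ + 2 * min (ε / 2) (u / 2) := key _ hε' hεu
      _ ≤ 3 * D₀ + ε := by
          have := min_le_left (ε / 2) (u / 2); linarith

/-- Excursion lemma: a geodesic whose endpoints are `τ`-close to the
`D₀`-contracting set `A` stays within `4τ` of `A`. -/
lemma exc {A : Set X} {D₀ : ℝ} (hD₀ : 0 < D₀) (hA : IsContractingSet D₀ A)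
    (hAne : A.Nonempty) (hAc : IsCompact A)
    {f : ℝ → X} {T : ℝ} (hf : IsomOn f T) (hT : 0 ≤ T)
    {τ : ℝ} (hτ : D₀ ≤ τ) (h0 : infDist (f 0) A ≤ τ) (hTd : infDist (f T) A ≤ τ) :
    ∀ t ∈ Icc (0:ℝ) T, infDist (f t) A ≤ 4 * τ := by
  intro t₀ ht₀
  by_cases hc : infDist (f t₀) A ≤ τ
  · linarith [hD₀]
  push_neg at hc
  set φ : ℝ → ℝ := fun t => infDist (f t) A with hφ
  have hφc : ContinuousOn φ (Icc 0 T) :=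
    (continuous_infDist_pt A).comp_continuousOn hf.continuousOn
  set S₁ : Set ℝ := Icc 0 t₀ ∩ φ ⁻¹' Iic τ with hS₁
  set S₂ : Set ℝ := Icc t₀ T ∩ φ ⁻¹' Iic τ with hS₂
  have hsub₁ : Icc (0:ℝ) t₀ ⊆ Icc 0 T := Icc_subset_Icc le_rfl ht₀.2
  have hsub₂ : Icc t₀ T ⊆ Icc (0:ℝ) T := Icc_subset_Icc ht₀.1 le_rfl
  have hS₁cl : IsClosed S₁ :=
    (hφc.mono hsub₁).preimage_isClosed_of_isClosed isClosed_Icc isClosed_Iic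
  have hS₂cl : IsClosed S₂ :=
    (hφc.mono hsub₂).preimage_isClosed_of_isClosed isClosed_Icc isClosed_Iic
  have hS₁ne : S₁.Nonempty := ⟨0, left_mem_Icc.2 ht₀.1, h0⟩
  have hS₂ne : S₂.Nonempty := ⟨T, right_mem_Icc.2 ht₀.2, hTd⟩
  set s := sSup S₁ with hs
  set t := sInf S₂ with ht
  have hsS : s ∈ S₁ := hS₁cl.csSup_mem hS₁ne ⟨t₀, fun r hr => hr.1.2⟩
  have htS : t ∈ S₂ := hS₂cl.csInf_mem hS₂ne ⟨t₀, fun r hr => hr.1.1⟩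
  have hst₀ : s < t₀ := lt_of_le_of_ne hsS.1.2 (fun h => hc.not_ge (h ▸ hsS.2))
  have ht₀t : t₀ < t := lt_of_le_of_ne htS.1.1 (fun h => hc.not_ge (h.symm ▸ htS.2))
  have hfar : ∀ r ∈ Ioo s t, τ < infDist (f r) A := by
    intro r hr
    by_contra hcon
    push_neg at hcon
    rcases le_or_gt r t₀ with h | h
    · have : r ∈ S₁ := ⟨⟨le_trans hsS.1.1 (le_of_lt hr.1), h⟩, hcon⟩
      exact absurd (le_csSup ⟨t₀, fun w hw => hw.1.2⟩ this) (not_le.2 hr.1)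
    · have : r ∈ S₂ := ⟨⟨le_of_lt h, le_trans (le_of_lt hr.2) htS.1.2⟩, hcon⟩
      exact absurd (csInf_le ⟨t₀, fun w hw => hw.1.1⟩ this) (not_le.2 hr.2)
  have hsIcc : s ∈ Icc (0:ℝ) T := hsub₁ hsS.1
  have htIcc : t ∈ Icc (0:ℝ) T := hsub₂ htS.1
  -- t - s ≤ 2τ + D₀
  have hts : t - s ≤ 2 * τ + D₀ := by
    refine le_of_forall_pos_le_add ?_
    intro ε hε
    set ε' := min (ε / 4) (min (t₀ - s) (t - t₀)) with hε'
    have hε'pos : 0 < ε' := lt_min (by linarith) (lt_min (by linarith) (by linarith))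
    have hε'1 : ε' ≤ t₀ - s := le_trans (min_le_right _ _) (min_le_left _ _)
    have hε'2 : ε' ≤ t - t₀ := le_trans (min_le_right _ _) (min_le_right _ _)
    have hε'3 : ε' ≤ ε / 4 := min_le_left _ _
    have h1 : (0:ℝ) ≤ s + ε' := by linarith [hsIcc.1]
    have h2 : s + ε' ≤ t - ε' := by linarith
    have h3 : t - ε' ≤ T := by linarith [htIcc.2]
    obtain ⟨p, hp⟩ := proj_nonempty hAc hAne (f (s + ε'))
    obtain ⟨q, hq⟩ := proj_nonempty hAc hAne (f (t - ε'))
    have hfar' : ∀ r ∈ Icc (s + ε') (t - ε'), D₀ < infDist (f r) A := by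
      intro r hr
      exact lt_of_le_of_lt hτ (hfar r ⟨by linarith [hr.1], by linarith [hr.2]⟩)
    have hpp : p ∈ projSet A (f '' Icc (s + ε') (t - ε')) :=
      mem_projSet (mem_image_of_mem f (left_mem_Icc.2 h2)) hp
    have hqq : q ∈ projSet A (f '' Icc (s + ε') (t - ε')) :=
      mem_projSet (mem_image_of_mem f (right_mem_Icc.2 h2)) hq
    have hlt : dist p q < D₀ := contr_apply hA hAne hAc hf h1 h2 h3 hfar' hpp hqq
    have hd : dist (f (s + ε')) (f (t - ε')) = t - s - 2 * ε' := by
      rw [hf _ ⟨h1, by linarith⟩ _ ⟨by linarith, h3⟩]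
      rw [abs_of_nonpos (by linarith)]; ring
    have hi1 : infDist (f (s + ε')) A ≤ τ + ε' := by
      refine le_trans (infDist_le_infDist_add_dist (y := f s)) ?_
      have : dist (f (s + ε')) (f s) = ε' := by
        rw [hf _ ⟨h1, by linarith⟩ _ hsIcc, abs_of_nonneg (by linarith)]; ring
      have e5 : infDist (f s) A ≤ τ := hsS.2
      rw [this]; linarith
    have hi2 : infDist (f (t - ε')) A ≤ τ + ε' := by
      refine le_trans (infDist_le_infDist_add_dist (y := f t)) ?_
      have : dist (f (t - ε')) (f t) = ε' := by
        rw [hf _ ⟨by linarith, h3⟩ _ htIcc, abs_of_nonpos (by linarith)]; ring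
      have e5 : infDist (f t) A ≤ τ := htS.2
      rw [this]; linarith
    have : t - s - 2 * ε' ≤ (τ + ε') + D₀ + (τ + ε') := by
      calc t - s - 2 * ε' = dist (f (s + ε')) (f (t - ε')) := hd.symm
        _ ≤ dist (f (s + ε')) p + dist p q + dist q (f (t - ε')) := dist_triangle4 _ _ _ _
        _ ≤ (τ + ε') + D₀ + (τ + ε') := by
            have e1 : dist (f (s + ε')) p = infDist (f (s + ε')) A := hp.2
            have e2 : dist q (f (t - ε')) = infDist (f (t - ε')) A := by
              rw [dist_comm]; exact hq.2
            rw [e1, e2]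
            linarith [hlt, hi1, hi2]
    linarith
  have hdist : dist (f t₀) (f s) = t₀ - s := by
    rw [hf _ ht₀ _ hsIcc, abs_of_nonneg (by linarith)]
  have h5 : infDist (f t₀) A ≤ infDist (f s) A + (t₀ - s) := by
    have h6 := infDist_le_infDist_add_dist (x := f t₀) (y := f s) (s := A)
    rwa [hdist] at h6
  have h7 : infDist (f s) A ≤ τ := hsS.2

  linarith [ht₀t.le]
/-- Chain lemma: if a geodesic `β` stays `R`-close to `γ = f '' Icc 0 M` and its
endpoints are close to `f u₁`, `f u₂` with `u₁ ≤ v ≤ u₂`, then some point of `β`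
is `4R`-close to `f v`. -/
lemma chain {f : ℝ → X} {M : ℝ} (hf : IsomOn f M)
    {β : ℝ → X} {T : ℝ} (hβ : IsomOn β T) (hT : 0 ≤ T)
    {R : ℝ} (hR : 0 < R)
    (hnear : ∀ t ∈ Icc (0:ℝ) T, infDist (β t) (f '' Icc 0 M) ≤ R)
    {v u₁ u₂ : ℝ} (hv : v ∈ Icc 0 M) (hu₁ : u₁ ∈ Icc 0 M) (hu₂ : u₂ ∈ Icc 0 M)
    (h₁v : u₁ ≤ v) (hv₂ : v ≤ u₂)
    (hd₁ : dist (β 0) (f u₁) ≤ R) (hd₂ : dist (β T) (f u₂) ≤ R) :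
    ∃ t ∈ Icc (0:ℝ) T, dist (β t) (f v) ≤ 4 * R := by
  have hfv : IsomOn f v := fun s hs t ht =>
    hf s ⟨hs.1, le_trans hs.2 hv.2⟩ t ⟨ht.1, le_trans ht.2 hv.2⟩
  have hγLc : IsCompact (f '' Icc 0 v) := hfv.compact_image
  have hγLne : (f '' Icc 0 v).Nonempty := image_nonempty hv.1
  set S : Set ℝ := Icc 0 T ∩ (fun t => infDist (β t) (f '' Icc 0 v)) ⁻¹' Iic R with hS
  have hScl : IsClosed S :=
    (((continuous_infDist_pt _).comp_continuousOn
      hβ.continuousOn)).preimage_isClosed_of_isClosed isClosed_Icc isClosed_Iic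
  have h0S : (0:ℝ) ∈ S := by
    refine ⟨left_mem_Icc.2 hT, ?_⟩
    have : f u₁ ∈ f '' Icc 0 v := mem_image_of_mem f ⟨hu₁.1, h₁v⟩
    exact le_trans (infDist_le_dist_of_mem this) hd₁
  have hSbdd : BddAbove S := ⟨T, fun r hr => hr.1.2⟩
  set t₀ := sSup S with ht₀
  have ht₀S : t₀ ∈ S := hScl.csSup_mem ⟨0, h0S⟩ hSbdd
  obtain ⟨ga, hgaMem, hgaD⟩ := hγLc.exists_infDist_eq_dist hγLne (β t₀)
  obtain ⟨ua, hua, hgaEq⟩ := hgaMem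
  have hdga : dist (β t₀) ga ≤ R := hgaD ▸ ht₀S.2
  rcases eq_or_lt_of_le ht₀S.1.2 with hTT | hTT
  · -- t₀ = T
    refine ⟨T, right_mem_Icc.2 hT, ?_⟩
    have hva : v - ua ≤ 2 * R := by
      have h1 : dist (f u₂) (f ua) = u₂ - ua := by
        rw [hf _ hu₂ _ ⟨hua.1, le_trans hua.2 hv.2⟩,
          abs_of_nonneg (by linarith [hua.2])]
      have h2 : dist (f u₂) (f ua) ≤ dist (f u₂) (β T) + dist (β T) ga := by
        rw [hgaEq]; exact dist_triangle _ _ _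
      rw [hTT] at hdga
      rw [dist_comm (f u₂) (β T)] at h2
      rw [h1] at h2
      linarith [hua.2]
    calc dist (β T) (f v) ≤ dist (β T) ga + dist ga (f v) := dist_triangle _ _ _
      _ ≤ R + (v - ua) := by
          have : dist ga (f v) = v - ua := by
            rw [← hgaEq, hf _ ⟨hua.1, le_trans hua.2 hv.2⟩ _ hv,
              abs_of_nonpos (by linarith [hua.2])]
            ring
          rw [this]
          rw [hTT] at hdga
          linarith
      _ ≤ 4 * R := by linarith
  · -- t₀ < T
    set δ := min R (T - t₀) with hδ
    have hδpos : 0 < δ := lt_min hR (by linarith)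
    have ht' : t₀ + δ ∈ Icc (0:ℝ) T := ⟨by linarith [ht₀S.1.1], by
      have := min_le_right R (T - t₀); linarith⟩
    have hnotS : t₀ + δ ∉ S := fun h =>
      absurd (le_csSup hSbdd h) (by push_neg; linarith)
    have hfarL : R < infDist (β (t₀ + δ)) (f '' Icc 0 v) := by
      by_contra hcon
      push_neg at hcon
      exact hnotS ⟨ht', hcon⟩
    obtain ⟨g', hg'Mem, hg'D⟩ :=
      hf.compact_image.exists_infDist_eq_dist (image_nonempty (le_trans hv.1 hv.2)) (β (t₀ + δ))
    obtain ⟨u', hu', hg'Eq⟩ := hg'Mem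
    have hdg' : dist (β (t₀ + δ)) g' ≤ R := by
      rw [← hg'D]; exact hnear _ ht'
    have hu'v : v < u' := by
      by_contra hcon
      push_neg at hcon
      have : g' ∈ f '' Icc 0 v := ⟨u', ⟨hu'.1, hcon⟩, hg'Eq⟩
      exact absurd (le_trans (infDist_le_dist_of_mem this) hdg') (not_le.2 hfarL)
    have hstep : u' - ua ≤ 3 * R := by
      have h1 : dist (f u') (f ua) = u' - ua := by
        rw [hf _ hu' _ ⟨hua.1, le_trans hua.2 hv.2⟩,
          abs_of_nonneg (by linarith [hua.2])]
      have h2 : dist (β t₀) (β (t₀ + δ)) = δ := by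
        rw [hβ _ ht₀S.1 _ ht', abs_of_nonpos (by linarith)]; ring
      have h3 : dist (f u') (f ua) ≤
          dist (f u') (β (t₀ + δ)) + dist (β (t₀ + δ)) (β t₀) + dist (β t₀) ga := by
        rw [hgaEq]; exact dist_triangle4 _ _ _ _
      have h4 : dist (f u') (β (t₀ + δ)) ≤ R := by
        rw [dist_comm, hg'Eq]; exact hdg'
      have h6 : dist (β (t₀ + δ)) (β t₀) = δ := by rw [dist_comm]; exact h2
      rw [h1, h6] at h3
      have h5 : δ ≤ R := min_le_left _ _
      linarith
    refine ⟨t₀, ht₀S.1, ?_⟩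
    calc dist (β t₀) (f v) ≤ dist (β t₀) ga + dist ga (f v) := dist_triangle _ _ _
      _ ≤ R + (v - ua) := by
          have : dist ga (f v) = v - ua := by
            rw [← hgaEq, hf _ ⟨hua.1, le_trans hua.2 hv.2⟩ _ hv,
              abs_of_nonpos (by linarith [hua.2])]
            ring
          rw [this]; linarith
      _ ≤ 4 * R := by linarith [hua.2, hu'v.le, hstep]
lemma clamp_mem {a b s : ℝ} (hab : a ≤ b) : max a (min s b) ∈ Icc a b :=
  ⟨le_max_left _ _, max_le hab (min_le_right s b)⟩

lemma clamp_lip {a b s s' : ℝ} : |max a (min s b) - max a (min s' b)| ≤ |s - s'| := by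
  rw [abs_le]
  constructor <;> simp only [min_def, max_def] <;> split_ifs <;>
    cases abs_cases (s - s') <;> linarith

lemma clamp_dist_le {a b s t : ℝ} (hs : a ≤ t) (ht : t ≤ b) :
    |s - max a (min s b)| ≤ |s - t| := by
  simp only [min_def, max_def]
  split_ifs <;> cases abs_cases (s - t) <;>
    first
      | (rw [abs_of_nonneg (by linarith)]; linarith)
      | (rw [abs_of_nonpos (by linarith)]; linarith)

section Gamma

variable (hX : GeodesicSpace X) {D : ℝ} (hD : 0 < D)
  {f : ℝ → X} {M : ℝ} (hf : IsomOn f M)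
  (hcontr : IsContractingSet D (f '' Icc 0 M))
  {a b : ℝ} (ha : 0 ≤ a) (hab : a ≤ b) (hbM : b ≤ M)

include hX hD hf hcontr ha hab hbM

/-- One-sided projection comparison: if the `γ`-projection of `w` has
parameter `s ≥ b`, then any `γ' = f '' [a,b]`-projection of `w` is `32D`-close
to `f b`. -/
lemma PCL_right {w p : X} (hp : p ∈ proj (f '' Icc a b) w)
    {s : ℝ} (hs : s ∈ Icc 0 M) (hgproj : f s ∈ proj (f '' Icc 0 M) w)
    (hsb : b ≤ s) : dist p (f b) ≤ 32 * D := by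
  have hM : (0:ℝ) ≤ M := le_trans (le_trans ha hab) hbM
  have hsubab : Icc a b ⊆ Icc 0 M := Icc_subset_Icc ha hbM
  have hγc : IsCompact (f '' Icc 0 M) := hf.compact_image
  have hγne : (f '' Icc 0 M).Nonempty := image_nonempty hM
  obtain ⟨up, hup, hupEq⟩ := hp.1
  have hpγ : p ∈ f '' Icc 0 M := ⟨up, hsubab hup, hupEq⟩
  -- geodesic from w to p
  obtain ⟨κ, β, T, hT0, hβ, hβ0, hβT, -⟩ := hX w p
  have hβisom : IsomOn β T := hβ
  have hTdist : T = dist w p := by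
    rw [← hβ0, ← hβT, hβ 0 (left_mem_Icc.2 hT0) T (right_mem_Icc.2 hT0)]
    rw [abs_of_nonpos (by linarith)]; ring
  have hTproj : T = infDist w (f '' Icc a b) := by rw [hTdist, hp.2]
  -- entry point
  have hend : infDist (β T) (f '' Icc 0 M) ≤ D := by
    rw [hβT]
    rw [infDist_zero_of_mem hpγ]; exact hD.le
  have hg0 : f s ∈ proj (f '' Icc 0 M) (β 0) := by rw [hβ0]; exact hgproj
  obtain ⟨u, huIcc, huD, g', hg', hgg'⟩ :=
    entry hD hcontr hγne hγc hβisom hT0 hend hg0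
  obtain ⟨sm, hsm, hsmEq⟩ := hg'.1
  have hssm : |s - sm| ≤ 3 * D := by
    rw [← hf s hs sm hsm, hsmEq]; exact hgg'
  have hβug' : dist (β u) g' ≤ D := by rw [hg'.2]; exact huD
  have hwu : dist w (β u) = u := by
    rw [← hβ0, hβ 0 (left_mem_Icc.2 hT0) u huIcc, abs_of_nonpos (by linarith [huIcc.1])]
    ring
  have hwγ : infDist w (f '' Icc 0 M) ≤ u + D := by
    calc infDist w (f '' Icc 0 M) ≤ infDist (β u) (f '' Icc 0 M) + dist w (β u) :=
          infDist_le_infDist_add_dist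
      _ ≤ D + u := by rw [hwu]; linarith [huD]
      _ = u + D := by ring
  have hfbγ' : f b ∈ f '' Icc a b := mem_image_of_mem f (right_mem_Icc.2 hab)
  rcases le_or_gt s (b + 7 * D) with hcase | hcase
  · -- s close to b
    have hws : dist w (f s) = infDist w (f '' Icc 0 M) := hgproj.2
    have hTb : T ≤ u + 8 * D := by
      have h1 : dist (f s) (f b) = s - b := by
        rw [hf s hs b ⟨le_trans ha hab, hbM⟩, abs_of_nonneg (by linarith)]
      calc T ≤ dist w (f b) := hTproj ▸ infDist_le_dist_of_mem hfbγ'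
        _ ≤ dist w (f s) + dist (f s) (f b) := dist_triangle _ _ _
        _ ≤ (u + D) + (s - b) := by rw [hws, h1]; linarith [hwγ]
        _ ≤ u + 8 * D := by linarith
    have htail : dist p (β u) = T - u := by
      rw [← hβT, dist_comm, hβ u huIcc T (right_mem_Icc.2 hT0),
        abs_of_nonpos (by linarith [huIcc.2])]
      ring
    have hgb : dist g' (f b) ≤ 10 * D := by
      rw [← hsmEq, hf sm hsm b ⟨le_trans ha hab, hbM⟩]
      cases abs_cases (s - sm) <;> cases abs_cases (sm - b) <;> linarith [hssm]
    calc dist p (f b) ≤ dist p (β u) + dist (β u) g' + dist g' (f b) :=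
          dist_triangle4 _ _ _ _
      _ ≤ (T - u) + D + 10 * D := by rw [htail]; linarith [hβug', hgb]
      _ ≤ 32 * D := by linarith [hTb]
  · -- s far beyond b
    have hsmb : b ≤ sm := by cases abs_cases (s - sm) <;> linarith [hssm]
    -- the tail of β stays 4D-close to γ
    obtain ⟨htailIsom, htailIm⟩ := hβisom.sub huIcc.1 huIcc.2 le_rfl
    have htailnear : ∀ r ∈ Icc (0:ℝ) (T - u), infDist (β (u + r)) (f '' Icc 0 M) ≤ 4 * D := by
      have h0' : infDist (β (u + 0)) (f '' Icc 0 M) ≤ D := by rw [add_zero]; exact huD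
      have hT' : infDist (β (u + (T - u))) (f '' Icc 0 M) ≤ D := by
        rw [show u + (T - u) = T by ring]; exact hend
      exact exc hD hcontr hγne hγc htailIsom (by linarith [huIcc.2]) le_rfl h0' hT'
    -- reversed tail, from p to β u
    obtain ⟨hrevIsom, hrevIm⟩ := htailIsom.rev (by linarith [huIcc.2])
    have hrevnear : ∀ r ∈ Icc (0:ℝ) (T - u),
        infDist ((fun r => β (u + (T - u - r))) r) (f '' Icc 0 M) ≤ 4 * D := by
      intro r hr
      exact htailnear (T - u - r) ⟨by linarith [hr.2], by linarith [hr.1]⟩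
    obtain ⟨r, hrIcc, hrb⟩ := chain hf hrevIsom (by linarith [huIcc.2])
      (by linarith : (0:ℝ) < 4 * D) hrevnear
      (⟨le_trans ha hab, hbM⟩ : b ∈ Icc 0 M) (hsubab hup) hsm hup.2 hsmb
      (by show dist (β (u + (T - u - 0))) (f up) ≤ 4 * D
          rw [show u + (T - u - 0) = T by ring, hβT, hupEq, dist_self]
          positivity)
      (by show dist (β (u + (T - u - (T - u)))) (f sm) ≤ 4 * D
          rw [show u + (T - u - (T - u)) = u by ring, hsmEq]
          linarith [hβug'])
    -- the chain point is 16D from f b, and hence close to p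
    set c := β (u + (T - u - r)) with hc
    have hcb : dist c (f b) ≤ 16 * D := by
      have : (4:ℝ) * (4 * D) = 16 * D := by ring
      rw [← this]; exact hrb
    have htc : u + (T - u - r) ∈ Icc (0:ℝ) T :=
      ⟨by linarith [huIcc.1, hrIcc.2], by linarith [hrIcc.1]⟩
    have hwc : dist w c = u + (T - u - r) := by
      rw [hc, ← hβ0, hβ 0 (left_mem_Icc.2 hT0) _ htc, abs_of_nonpos (by linarith [htc.1])]
      ring
    have hcp : dist c p = T - (u + (T - u - r)) := by
      rw [hc, ← hβT, hβ _ htc T (right_mem_Icc.2 hT0), abs_of_nonpos (by linarith [htc.2])]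
      ring
    have hTle : T ≤ dist w c + 16 * D := by
      calc T ≤ dist w (f b) := hTproj ▸ infDist_le_dist_of_mem hfbγ'
        _ ≤ dist w c + dist c (f b) := dist_triangle _ _ _
        _ ≤ dist w c + 16 * D := by linarith [hcb]
    have hcple : dist c p ≤ 16 * D := by rw [hcp]; rw [hwc] at hTle; linarith
    calc dist p (f b) ≤ dist p c + dist c (f b) := dist_triangle _ _ _
      _ ≤ 16 * D + 16 * D := by rw [dist_comm]; linarith [hcple, hcb]
      _ ≤ 32 * D := by linarith

end Gamma
section Gamma2

variable (hX : GeodesicSpace X) {D : ℝ} (hD : 0 < D)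
  {f : ℝ → X} {M : ℝ} (hf : IsomOn f M)
  (hcontr : IsContractingSet D (f '' Icc 0 M))
  {a b : ℝ} (ha : 0 ≤ a) (hab : a ≤ b) (hbM : b ≤ M)

lemma rev_image_ab : (fun r => f (M - r)) '' Icc (M - b) (M - a) = f '' Icc a b := by
  rw [← image_image f (fun r => M - r)]
  congr 1
  rw [image_const_sub_Icc]
  congr 1 <;> ring

include hX hD hf hcontr ha hab hbM

/-- Projection comparison lemma: a `γ'`-projection of `w` is `32D`-close to
the clamp of a `γ`-projection of `w`. -/
lemma PCL {w p : X} (hp : p ∈ proj (f '' Icc a b) w)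
    {s : ℝ} (hs : s ∈ Icc 0 M) (hgproj : f s ∈ proj (f '' Icc 0 M) w) :
    dist p (f (max a (min s b))) ≤ 32 * D := by
  have hM : (0:ℝ) ≤ M := le_trans (le_trans ha hab) hbM
  rcases le_or_gt b s with hsb | hsb
  · rw [min_eq_right hsb, max_eq_right hab]
    exact PCL_right hX hD hf hcontr ha hab hbM hp hs hgproj hsb
  rcases le_or_gt s a with hsa | hsa
  · rw [min_eq_left (le_trans hsa hab), max_eq_left hsa]
    obtain ⟨hfrev, him⟩ := hf.rev hM
    have hcontr' : IsContractingSet D ((fun r => f (M - r)) '' Icc 0 M) := by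
      rw [him]; exact hcontr
    have himab := rev_image_ab (f := f) (M := M) (a := a) (b := b)
    have hp' : p ∈ proj ((fun r => f (M - r)) '' Icc (M - b) (M - a)) w := by
      rw [himab]; exact hp
    have hs' : M - s ∈ Icc (0:ℝ) M := ⟨by linarith [hs.2], by linarith [hs.1]⟩
    have hgproj' : (fun r => f (M - r)) (M - s) ∈
        proj ((fun r => f (M - r)) '' Icc 0 M) w := by
      show f (M - (M - s)) ∈ proj ((fun r => f (M - r)) '' Icc 0 M) w
      rw [show M - (M - s) = s by ring, him]
      exact hgproj
    have := PCL_right hX hD hfrev hcontr' (by linarith : (0:ℝ) ≤ M - b)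
      (by linarith : M - b ≤ M - a) (by linarith : M - a ≤ M) hp' hs' hgproj'
      (by linarith : M - a ≤ M - s)
    show dist p (f a) ≤ 32 * D
    rwa [show M - (M - a) = a by ring] at this
  · -- a < s < b : interior case
    rw [min_eq_left hsb.le, max_eq_right hsa.le]
    have hsubab : Icc a b ⊆ Icc 0 M := Icc_subset_Icc ha hbM
    have hγc : IsCompact (f '' Icc 0 M) := hf.compact_image
    have hγne : (f '' Icc 0 M).Nonempty := image_nonempty hM
    obtain ⟨up, hup, hupEq⟩ := hp.1
    have hpγ : p ∈ f '' Icc 0 M := ⟨up, hsubab hup, hupEq⟩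
    obtain ⟨κ, β, T, hT0, hβ, hβ0, hβT, -⟩ := hX w p
    have hβisom : IsomOn β T := hβ
    have hTdist : T = dist w p := by
      rw [← hβ0, ← hβT, hβ 0 (left_mem_Icc.2 hT0) T (right_mem_Icc.2 hT0)]
      rw [abs_of_nonpos (by linarith)]; ring
    have hTproj : T = infDist w (f '' Icc a b) := by rw [hTdist, hp.2]
    have hend : infDist (β T) (f '' Icc 0 M) ≤ D := by
      rw [hβT, infDist_zero_of_mem hpγ]; exact hD.le
    have hg0 : f s ∈ proj (f '' Icc 0 M) (β 0) := by rw [hβ0]; exact hgproj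
    obtain ⟨u, huIcc, huD, g', hg', hgg'⟩ :=
      entry hD hcontr hγne hγc hβisom hT0 hend hg0
    obtain ⟨sm, hsm, hsmEq⟩ := hg'.1
    have hssm : |s - sm| ≤ 3 * D := by
      rw [← hf s hs sm hsm, hsmEq]; exact hgg'
    have hβug' : dist (β u) g' ≤ D := by rw [hg'.2]; exact huD
    have hwu : dist w (β u) = u := by
      rw [← hβ0, hβ 0 (left_mem_Icc.2 hT0) u huIcc,
        abs_of_nonpos (by linarith [huIcc.1])]
      ring
    set c := max a (min sm b) with hcdef
    have hcIcc : c ∈ Icc a b := clamp_mem hab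
    have hsmc : |sm - c| ≤ 3 * D := by
      refine le_trans (clamp_dist_le hsa.le hsb.le) ?_
      rw [abs_sub_comm]; exact hssm
    have hgc : dist g' (f c) ≤ 3 * D := by
      rw [← hsmEq, hf sm hsm c (hsubab hcIcc)]
      exact hsmc
    have hTle : T ≤ u + 4 * D := by
      calc T ≤ dist w (f c) := hTproj ▸ infDist_le_dist_of_mem (mem_image_of_mem f hcIcc)
        _ ≤ dist w (β u) + dist (β u) g' + dist g' (f c) := dist_triangle4 _ _ _ _
        _ ≤ u + D + 3 * D := by rw [hwu]; linarith [hβug', hgc]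
        _ = u + 4 * D := by ring
    have htail : dist p (β u) = T - u := by
      rw [← hβT, dist_comm, hβ u huIcc T (right_mem_Icc.2 hT0),
        abs_of_nonpos (by linarith [huIcc.2])]
      ring
    have hgs : dist g' (f s) ≤ 3 * D := by
      rw [← hsmEq, hf sm hsm s hs, abs_sub_comm]
      exact hssm
    calc dist p (f s) ≤ dist p (β u) + dist (β u) g' + dist g' (f s) :=
          dist_triangle4 _ _ _ _
      _ ≤ (T - u) + D + 3 * D := by rw [htail]; linarith [hβug', hgs]
      _ ≤ 32 * D := by linarith [hTle]

end Gamma2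
section Gamma3

variable (hX : GeodesicSpace X) {D : ℝ} (hD : 0 < D)
  {f : ℝ → X} {M : ℝ} (hf : IsomOn f M)
  (hcontr : IsContractingSet D (f '' Icc 0 M))
  {a b : ℝ} (ha : 0 ≤ a) (hab : a ≤ b) (hbM : b ≤ M)

include hX hD hf hcontr ha hab hbM

/-- If a geodesic `β` starts at `w`, stays far from `γ' = f '' [a,b]`, and ends
at a point near `γ` whose shadow parameter exceeds `b`, then the `γ'`-projection
of `w` is `35D`-close to `f b`. -/
lemma side_bound {β : ℝ → X} {T' : ℝ} (hβ : IsomOn β T') (hT' : 0 ≤ T')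
    (hfar : ∀ t ∈ Icc (0:ℝ) T', 71 * D < infDist (β t) (f '' Icc a b))
    (hmD : infDist (β T') (f '' Icc 0 M) ≤ D)
    {sm : ℝ} (hsm : sm ∈ Icc 0 M) (hsmproj : f sm ∈ proj (f '' Icc 0 M) (β T'))
    (hsmb : b < sm)
    {p : X} (hp : p ∈ proj (f '' Icc a b) (β 0)) :
    dist p (f b) ≤ 35 * D := by
  have hM : (0:ℝ) ≤ M := le_trans (le_trans ha hab) hbM
  have hsubab : Icc a b ⊆ Icc 0 M := Icc_subset_Icc ha hbM
  have hγc : IsCompact (f '' Icc 0 M) := hf.compact_image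
  have hγne : (f '' Icc 0 M).Nonempty := image_nonempty hM
  obtain ⟨g, hg⟩ := proj_nonempty hγc hγne (β 0)
  obtain ⟨s, hsIcc, hsEq⟩ := hg.1
  obtain ⟨u, huIcc, huD, g₁, hg₁, hgg₁⟩ :=
    entry hD hcontr hγne hγc hβ hT' hmD (hsEq ▸ hg)
  obtain ⟨s₁, hs₁Icc, hs₁Eq⟩ := hg₁.1
  have hss₁ : |s - s₁| ≤ 3 * D := by
    rw [← hf s hsIcc s₁ hs₁Icc, hs₁Eq]; exact hgg₁
  -- claim : b < s₁
  have hbs₁ : b < s₁ := by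
    by_contra hcon
    push_neg at hcon
    -- chain along β from u to T' crossing parameter b
    obtain ⟨hsubIsom, -⟩ := hβ.sub huIcc.1 huIcc.2 le_rfl
    have h00 : infDist ((fun r => β (u + r)) 0) (f '' Icc 0 M) ≤ D := by
      show infDist (β (u + 0)) _ ≤ D
      rw [add_zero]; exact huD
    have h11 : infDist ((fun r => β (u + r)) (T' - u)) (f '' Icc 0 M) ≤ D := by
      show infDist (β (u + (T' - u))) _ ≤ D
      rw [show u + (T' - u) = T' by ring]; exact hmD
    have hnear := exc hD hcontr hγne hγc hsubIsom (by linarith [huIcc.2]) le_rfl h00 h11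
    obtain ⟨t, htIcc, htb⟩ := chain hf hsubIsom (by linarith [huIcc.2])
      (by linarith : (0:ℝ) < 4 * D) hnear
      (⟨le_trans ha hab, hbM⟩ : b ∈ Icc 0 M) hs₁Icc hsm hcon hsmb.le
      (by show dist (β (u + 0)) (f s₁) ≤ 4 * D
          rw [add_zero, hs₁Eq]
          have : dist (β u) g₁ = infDist (β u) (f '' Icc 0 M) := hg₁.2
          rw [this]; linarith)
      (by show dist (β (u + (T' - u))) (f sm) ≤ 4 * D
          rw [show u + (T' - u) = T' by ring]
          have : dist (β T') (f sm) = infDist (β T') (f '' Icc 0 M) := hsmproj.2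
          rw [this]; linarith)
    have hmem : f b ∈ f '' Icc a b := mem_image_of_mem f (right_mem_Icc.2 hab)
    have h1 : infDist (β (u + t)) (f '' Icc a b) ≤ 4 * (4 * D) :=
      le_trans (infDist_le_dist_of_mem hmem) htb
    have h2 : 71 * D < infDist (β (u + t)) (f '' Icc a b) :=
      hfar (u + t) ⟨by linarith [huIcc.1, htIcc.1], by linarith [htIcc.2, huIcc.1]⟩
    linarith
  have hsb : b - 3 * D < s := by
    cases abs_cases (s - s₁) <;> linarith [hss₁]
  have hPCL := PCL hX hD hf hcontr ha hab hbM hp hsIcc (hsEq ▸ hg)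
  have hclamp1 : b - 3 * D < max a (min s b) := by
    rcases le_total s b with h | h
    · rw [min_eq_left h]; exact lt_of_lt_of_le hsb (le_max_right a s)
    · rw [min_eq_right h]
      calc b - 3 * D < b := by linarith
        _ ≤ max a b := le_max_right a b
  have hclamp2 : max a (min s b) ≤ b := (clamp_mem hab).2
  have hfcb : dist (f (max a (min s b))) (f b) ≤ 3 * D := by
    rw [hf _ (hsubab (clamp_mem hab)) b ⟨le_trans ha hab, hbM⟩]
    rw [abs_of_nonpos (by linarith)]
    linarith
  calc dist p (f b) ≤ dist p (f (max a (min s b))) + dist (f (max a (min s b))) (f b) :=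
        dist_triangle _ _ _
    _ ≤ 32 * D + 3 * D := by linarith [hPCL, hfcb]
    _ = 35 * D := by ring

end Gamma3
section Gamma4

variable (hX : GeodesicSpace X) {D : ℝ} (hD : 0 < D)
  {f : ℝ → X} {M : ℝ} (hf : IsomOn f M)
  (hcontr : IsContractingSet D (f '' Icc 0 M))
  {a b : ℝ} (ha : 0 ≤ a) (hab : a ≤ b) (hbM : b ≤ M)

include hX hD hf hcontr ha hab hbM

lemma near_point_bound {k : ℝ → X} {N : ℝ} (hk : IsomOn k N) (hN : 0 ≤ N)
    (hfar : ∀ t ∈ Icc (0:ℝ) N, 71 * D < infDist (k t) (f '' Icc a b))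
    {t₀ : ℝ} (ht₀ : t₀ ∈ Icc (0:ℝ) N) (hmD : infDist (k t₀) (f '' Icc 0 M) ≤ D)
    {sm : ℝ} (hsm : sm ∈ Icc 0 M) (hsmproj : f sm ∈ proj (f '' Icc 0 M) (k t₀))
    (hsmb : b < sm)
    {t₁ : ℝ} (ht₁ : t₁ ∈ Icc (0:ℝ) N) {p : X}
    (hp : p ∈ proj (f '' Icc a b) (k t₁)) :
    dist p (f b) ≤ 35 * D := by
  rcases le_total t₁ t₀ with hord | hord
  · -- forward subsegment from t₁ to t₀
    obtain ⟨hβ, -⟩ := hk.sub ht₁.1 hord ht₀.2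
    refine side_bound hX hD hf hcontr ha hab hbM hβ (by linarith)
      (fun t ht => hfar (t₁ + t) ⟨by linarith [ht.1, ht₁.1], by linarith [ht.2, ht₀.2]⟩)
      ?_ hsm ?_ hsmb ?_
    · show infDist (k (t₁ + (t₀ - t₁))) (f '' Icc 0 M) ≤ D
      rw [show t₁ + (t₀ - t₁) = t₀ by ring]; exact hmD
    · show f sm ∈ proj (f '' Icc 0 M) (k (t₁ + (t₀ - t₁)))
      rw [show t₁ + (t₀ - t₁) = t₀ by ring]; exact hsmproj
    · show p ∈ proj (f '' Icc a b) (k (t₁ + 0))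
      rw [add_zero]; exact hp
  · -- reversed subsegment from t₁ back to t₀
    obtain ⟨hβ₂, -⟩ := hk.sub ht₀.1 hord ht₁.2
    obtain ⟨hβ, -⟩ := hβ₂.rev (by linarith)
    refine side_bound hX hD hf hcontr ha hab hbM hβ (by linarith)
      (fun t ht => ?_) ?_ hsm ?_ hsmb ?_
    · show 71 * D < infDist (k (t₀ + (t₁ - t₀ - t))) (f '' Icc a b)
      exact hfar _ ⟨by linarith [ht.2, ht₀.1], by linarith [ht.1, ht₁.2]⟩
    · show infDist (k (t₀ + (t₁ - t₀ - (t₁ - t₀)))) (f '' Icc 0 M) ≤ D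
      rw [show t₀ + (t₁ - t₀ - (t₁ - t₀)) = t₀ by ring]; exact hmD
    · show f sm ∈ proj (f '' Icc 0 M) (k (t₀ + (t₁ - t₀ - (t₁ - t₀))))
      rw [show t₀ + (t₁ - t₀ - (t₁ - t₀)) = t₀ by ring]; exact hsmproj
    · show p ∈ proj (f '' Icc a b) (k (t₀ + (t₁ - t₀ - 0)))
      rw [show t₀ + (t₁ - t₀ - 0) = t₁ by ring]; exact hp

/-- Projections of points of a geodesic far from `γ' = f '' [a,b]` onto `γ'`
are `70D`-close to each other. -/
lemma subseg_proj_bound {k : ℝ → X} {N : ℝ} (hk : IsomOn k N) (hN : 0 ≤ N)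
    (hfar : ∀ t ∈ Icc (0:ℝ) N, 71 * D < infDist (k t) (f '' Icc a b))
    {t₁ t₂ : ℝ} (ht₁ : t₁ ∈ Icc (0:ℝ) N) (ht₂ : t₂ ∈ Icc (0:ℝ) N)
    {p q : X} (hp : p ∈ proj (f '' Icc a b) (k t₁))
    (hq : q ∈ proj (f '' Icc a b) (k t₂)) :
    dist p q ≤ 70 * D := by
  have hM : (0:ℝ) ≤ M := le_trans (le_trans ha hab) hbM
  have hsubab : Icc a b ⊆ Icc 0 M := Icc_subset_Icc ha hbM
  have hγc : IsCompact (f '' Icc 0 M) := hf.compact_image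
  have hγne : (f '' Icc 0 M).Nonempty := image_nonempty hM
  by_cases hmid : ∃ t₀ ∈ Icc (0:ℝ) N, infDist (k t₀) (f '' Icc 0 M) ≤ D
  · obtain ⟨t₀, ht₀, hmD⟩ := hmid
    obtain ⟨gm, hgm⟩ := proj_nonempty hγc hγne (k t₀)
    obtain ⟨sm, hsm, hsmEq⟩ := hgm.1
    -- the parameter sm lies far outside [a, b]
    have hout : 70 * D < |sm - max a (min sm b)| := by
      have h71 : 71 * D < infDist (k t₀) (f '' Icc a b) := hfar t₀ ht₀
      have hcl : f (max a (min sm b)) ∈ f '' Icc a b :=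
        mem_image_of_mem f (clamp_mem hab)
      have h1 : infDist (k t₀) (f '' Icc a b) ≤ dist (k t₀) (f (max a (min sm b))) :=
        infDist_le_dist_of_mem hcl
      have h2 : dist (k t₀) (f (max a (min sm b))) ≤
          dist (k t₀) (f sm) + dist (f sm) (f (max a (min sm b))) := dist_triangle _ _ _
      have h3 : dist (k t₀) (f sm) ≤ D := by
        rw [hsmEq]
        have : dist (k t₀) gm = infDist (k t₀) (f '' Icc 0 M) := hgm.2
        rw [this]; exact hmD
      have h4 : dist (f sm) (f (max a (min sm b))) = |sm - max a (min sm b)| :=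
        hf sm hsm _ (hsubab (clamp_mem hab))
      linarith
    rcases le_or_gt sm b with hsmb | hsmb
    · rcases le_or_gt a sm with hasm | hasm
      · -- sm ∈ [a,b] : impossible
        rw [min_eq_left hsmb, max_eq_right hasm] at hout
        simp only [sub_self, abs_zero] at hout
        linarith
      · -- sm < a : left side, use reversed parametrization of γ
        obtain ⟨hfrev, him⟩ := hf.rev hM
        have hcontr' : IsContractingSet D ((fun r => f (M - r)) '' Icc 0 M) := by
          rw [him]; exact hcontr
        have himab := rev_image_ab (f := f) (M := M) (a := a) (b := b)
        have hsm' : M - sm ∈ Icc (0:ℝ) M := ⟨by linarith [hsm.2], by linarith [hsm.1]⟩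
        have hsmproj' : (fun r => f (M - r)) (M - sm) ∈
            proj ((fun r => f (M - r)) '' Icc 0 M) (k t₀) := by
          show f (M - (M - sm)) ∈ _
          rw [show M - (M - sm) = sm by ring, him, hsmEq]
          exact hgm
        have hfar' : ∀ t ∈ Icc (0:ℝ) N,
            71 * D < infDist (k t) ((fun r => f (M - r)) '' Icc (M - b) (M - a)) := by
          intro t ht; rw [himab]; exact hfar t ht
        have hmD' : infDist (k t₀) ((fun r => f (M - r)) '' Icc 0 M) ≤ D := by
          rw [him]; exact hmD
        have hp' : p ∈ proj ((fun r => f (M - r)) '' Icc (M - b) (M - a)) (k t₁) := by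
          rw [himab]; exact hp
        have hq' : q ∈ proj ((fun r => f (M - r)) '' Icc (M - b) (M - a)) (k t₂) := by
          rw [himab]; exact hq
        have hbp := near_point_bound hX hD hfrev hcontr' (by linarith : (0:ℝ) ≤ M - b)
          (by linarith : M - b ≤ M - a) (by linarith : M - a ≤ M) hk hN hfar' ht₀ hmD'
          hsm' hsmproj' (by linarith : M - a < M - sm) ht₁ hp'
        have hbq := near_point_bound hX hD hfrev hcontr' (by linarith : (0:ℝ) ≤ M - b)
          (by linarith : M - b ≤ M - a) (by linarith : M - a ≤ M) hk hN hfar' ht₀ hmD'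
          hsm' hsmproj' (by linarith : M - a < M - sm) ht₂ hq'
        calc dist p q ≤ dist p (f (M - (M - a))) + dist q (f (M - (M - a))) :=
              dist_triangle_right _ _ _
          _ ≤ 35 * D + 35 * D := by exact add_le_add hbp hbq
          _ = 70 * D := by ring
    · -- b < sm : right side
      have hsmproj : f sm ∈ proj (f '' Icc 0 M) (k t₀) := by rw [hsmEq]; exact hgm
      have hbp := near_point_bound hX hD hf hcontr ha hab hbM hk hN hfar ht₀ hmD
        hsm hsmproj hsmb ht₁ hp
      have hbq := near_point_bound hX hD hf hcontr ha hab hbM hk hN hfar ht₀ hmD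
        hsm hsmproj hsmb ht₂ hq
      calc dist p q ≤ dist p (f b) + dist q (f b) := dist_triangle_right _ _ _
        _ ≤ 35 * D + 35 * D := add_le_add hbp hbq
        _ = 70 * D := by ring
  · -- κ entirely far from γ : direct contraction of γ
    push_neg at hmid
    obtain ⟨gw, hgw⟩ := proj_nonempty hγc hγne (k t₁)
    obtain ⟨gz, hgz⟩ := proj_nonempty hγc hγne (k t₂)
    obtain ⟨sw, hsw, hswEq⟩ := hgw.1
    obtain ⟨sz, hsz, hszEq⟩ := hgz.1
    have hgg : dist gw gz < D := by
      refine contr_apply hcontr hγne hγc hk (le_refl (0:ℝ)) hN (le_refl N)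
        (fun t ht => hmid t ht) ?_ ?_
      · exact mem_projSet (mem_image_of_mem k ht₁) hgw
      · exact mem_projSet (mem_image_of_mem k ht₂) hgz
    have hswz : |sw - sz| < D := by
      rw [← hf sw hsw sz hsz, hswEq, hszEq]; exact hgg
    have hclip : |max a (min sw b) - max a (min sz b)| ≤ |sw - sz| := clamp_lip
    have hPw := PCL hX hD hf hcontr ha hab hbM hp hsw (hswEq ▸ hgw)
    have hPz := PCL hX hD hf hcontr ha hab hbM hq hsz (hszEq ▸ hgz)
    have hcc : dist (f (max a (min sw b))) (f (max a (min sz b))) ≤ |sw - sz| := by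
      rw [hf _ (hsubab (clamp_mem hab)) _ (hsubab (clamp_mem hab))]
      exact hclip
    calc dist p q ≤ dist p (f (max a (min sw b))) +
          dist (f (max a (min sw b))) (f (max a (min sz b))) +
          dist (f (max a (min sz b))) q := dist_triangle4 _ _ _ _
      _ ≤ 32 * D + D + 32 * D := by
          rw [dist_comm (f (max a (min sz b))) q]
          linarith [hPw, hPz, hcc, hswz]
      _ ≤ 70 * D := by linarith

end Gamma4
section Gamma5

variable (hX : GeodesicSpace X) {D : ℝ} (hD : 0 < D)
  {f : ℝ → X} {M : ℝ} (hf : IsomOn f M)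
  (hcontr : IsContractingSet D (f '' Icc 0 M))
  {a b : ℝ} (ha : 0 ≤ a) (hab : a ≤ b) (hbM : b ≤ M)

include hX hD hf hcontr ha hab hbM

/-- A subsegment of a `D`-contracting geodesic is `71D`-contracting. -/
lemma subseg_contracting : IsContractingSet (71 * D) (f '' Icc a b) := by
  intro κ hκ hsd
  obtain ⟨xk, yk, k, N, hN, hk, -, -, hκeq⟩ := hκ
  subst hκeq
  have hγ'ne : (f '' Icc a b).Nonempty := ⟨f a, mem_image_of_mem f (left_mem_Icc.2 hab)⟩
  have hfar : ∀ t ∈ Icc (0:ℝ) N, 71 * D < infDist (k t) (f '' Icc a b) := by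
    intro t ht
    refine lt_of_lt_of_le hsd (le_infDist' hγ'ne ?_)
    intro g hg
    rw [dist_comm]
    exact setDist_le_dist hg (mem_image_of_mem k ht)
  have hdiam : diam (projSet (f '' Icc a b) (k '' Icc 0 N)) ≤ 70 * D := by
    refine diam_le_of_forall_dist_le (by linarith) ?_
    intro p hp q hq
    rcases mem_iUnion₂.1 hp with ⟨w, hw, hpw⟩
    rcases mem_iUnion₂.1 hq with ⟨z, hz, hqz⟩
    obtain ⟨t₁, ht₁, rfl⟩ := hw
    obtain ⟨t₂, ht₂, rfl⟩ := hz
    exact subseg_proj_bound hX hD hf hcontr ha hab hbM hk hN hfar ht₁ ht₂ hpw hqz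
  exact lt_of_le_of_lt hdiam (by linarith)

/-- Transfer lemma: if `σ'` is within Hausdorff-type distance of the contracting
subsegment `f '' [a,b]`, then projections to `σ'` are close to projections to the
subsegment. -/
lemma near_transfer {σ' : Set X}
    (hC1 : ∀ z ∈ σ', infDist z (f '' Icc a b) ≤ 4 * D)
    (hC2 : ∀ g ∈ f '' Icc a b, infDist g σ' ≤ 16 * D)
    {w p α : X} (hp : p ∈ proj σ' w) (hα : α ∈ proj (f '' Icc a b) w) :
    dist p α ≤ 371 * D := by
  have hγ'ne : (f '' Icc a b).Nonempty := ⟨f a, mem_image_of_mem f (left_mem_Icc.2 hab)⟩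
  have hγ'c : IsCompact (f '' Icc a b) := by
    have hfab : IsomOn (fun r => f (a + r)) (b - a) := (hf.sub ha hab hbM).1
    rw [← (hf.sub ha hab hbM).2]
    exact hfab.compact_image
  have hcontr' := subseg_contracting hX hD hf hcontr ha hab hbM
  have hD' : (0:ℝ) < 71 * D := by linarith
  -- infDist to σ' is controlled by infDist to the subsegment
  have hC2' : ∀ v : X, infDist v σ' ≤ infDist v (f '' Icc a b) + 16 * D := by
    intro v
    have : infDist v σ' - 16 * D ≤ infDist v (f '' Icc a b) := by
      refine le_infDist' hγ'ne ?_
      intro g hg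
      have h1 : infDist v σ' ≤ infDist g σ' + dist v g := infDist_le_infDist_add_dist
      have h2 := hC2 g hg
      linarith
    linarith
  obtain ⟨κβ, β, T, hT0, hβ, hβ0, hβT, -⟩ := hX w p
  have hβisom : IsomOn β T := hβ
  have hTdist : T = dist w p := by
    rw [← hβ0, ← hβT, hβ 0 (left_mem_Icc.2 hT0) T (right_mem_Icc.2 hT0)]
    rw [abs_of_nonpos (by linarith)]; ring
  have hTproj : T = infDist w σ' := by rw [hTdist, hp.2]
  have hend : infDist (β T) (f '' Icc a b) ≤ 71 * D := by
    rw [hβT]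
    exact le_trans (hC1 p hp.1) (by linarith)
  have hα0 : α ∈ proj (f '' Icc a b) (β 0) := by rw [hβ0]; exact hα
  obtain ⟨u, huIcc, huD, α', hα', hαα'⟩ :=
    entry hD' hcontr' hγ'ne hγ'c hβisom hT0 hend hα0
  have hwu : dist w (β u) = u := by
    rw [← hβ0, hβ 0 (left_mem_Icc.2 hT0) u huIcc,
      abs_of_nonpos (by linarith [huIcc.1])]
    ring
  have hTub : T ≤ u + 71 * D + 16 * D := by
    have h1 : infDist w (f '' Icc a b) ≤ infDist (β u) (f '' Icc a b) + dist w (β u) :=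
      infDist_le_infDist_add_dist
    rw [hwu] at h1
    have h2 := hC2' w
    rw [← hTproj] at h2
    linarith
  have htail : dist p (β u) = T - u := by
    rw [← hβT, dist_comm, hβ u huIcc T (right_mem_Icc.2 hT0),
      abs_of_nonpos (by linarith [huIcc.2])]
    ring
  have hβuα' : dist (β u) α' ≤ 71 * D := by rw [hα'.2]; exact huD
  calc dist p α ≤ dist p (β u) + dist (β u) α' + dist α' α := dist_triangle4 _ _ _ _
    _ ≤ (T - u) + 71 * D + 3 * (71 * D) := by
        rw [htail, dist_comm α' α]
        linarith [hβuα', hαα']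
    _ ≤ 371 * D := by linarith [hTub]

end Gamma5
/-- there is `E = E(D) > D` such that a geodesic between two points
of the `D`-neighborhood of a `D`-contracting geodesic `γ` is `E`-contracting and
stays in the `E`-neighborhood of `γ`. -/
theorem stmt12 {X : Type*} [MetricSpace X] [ProperSpace X]
    (hX : GeodesicSpace X) (D : ℝ) (hD : 0 < D) :
    ∃ E : ℝ, D < E ∧
      ∀ (γ σ : Set X) (x y : X), IsGeodesic γ → IsContractingSet D γ →
        infDist x γ ≤ D → infDist y γ ≤ D → IsGeodesicSeg σ x y →
        IsContractingSet E σ ∧ ∀ z ∈ σ, infDist z γ ≤ E := by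
  refine ⟨900 * D, by linarith, ?_⟩
  intro γ σ x y hγgeo hcontrγ hx hy hσ
  obtain ⟨xg, yg, f, M, hM0, hf', -, -, hγeq⟩ := hγgeo
  obtain ⟨e, L, hL0, he', he0, heL, hσeq⟩ := hσ
  subst hγeq hσeq
  have hf : IsomOn f M := hf'
  have he : IsomOn e L := he'
  have hγc : IsCompact (f '' Icc 0 M) := hf.compact_image
  have hγne : (f '' Icc 0 M).Nonempty := image_nonempty hM0
  have hσne : (e '' Icc 0 L).Nonempty := image_nonempty hL0
  have hx' : infDist (e 0) (f '' Icc 0 M) ≤ D := by rw [he0]; exact hx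
  have hy' : infDist (e L) (f '' Icc 0 M) ≤ D := by rw [heL]; exact hy
  have hσnear : ∀ t ∈ Icc (0:ℝ) L, infDist (e t) (f '' Icc 0 M) ≤ 4 * D :=
    exc hD hcontrγ hγne hγc he hL0 le_rfl hx' hy'
  have hnbhd : ∀ z ∈ e '' Icc 0 L, infDist z (f '' Icc 0 M) ≤ 900 * D := by
    rintro z ⟨t, ht, rfl⟩
    linarith [hσnear t ht]
  -- the set of parameters of shadows of σ on γ
  set P : Set ℝ :=
    {s | s ∈ Icc (0:ℝ) M ∧ ∃ t ∈ Icc (0:ℝ) L, f s ∈ proj (f '' Icc 0 M) (e t)} with hPdef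
  have hPne : P.Nonempty := by
    obtain ⟨g, hg⟩ := proj_nonempty hγc hγne (e 0)
    obtain ⟨s, hs, rfl⟩ := hg.1
    exact ⟨s, hs, 0, left_mem_Icc.2 hL0, hg⟩
  have hPbb : BddBelow P := ⟨0, fun s hs => hs.1.1⟩
  have hPba : BddAbove P := ⟨M, fun s hs => hs.1.2⟩
  set a := sInf P with hadef
  set b := sSup P with hbdef
  have ha : 0 ≤ a := le_csInf hPne fun s hs => hs.1.1
  have hbM : b ≤ M := csSup_le hPne fun s hs => hs.1.2
  have hab : a ≤ b := csInf_le_csSup hPne hPbb hPba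
  have hγ'ne : (f '' Icc a b).Nonempty := ⟨f a, mem_image_of_mem f (left_mem_Icc.2 hab)⟩
  have hγ'c : IsCompact (f '' Icc a b) := by
    rw [← (hf.sub ha hab hbM).2]
    exact (hf.sub ha hab hbM).1.compact_image
  -- σ is within 4D of the subsegment γ' = f '' [a,b]
  have hC1 : ∀ z ∈ e '' Icc 0 L, infDist z (f '' Icc a b) ≤ 4 * D := by
    rintro z ⟨t, ht, rfl⟩
    obtain ⟨g, hg⟩ := proj_nonempty hγc hγne (e t)
    obtain ⟨s, hs, rfl⟩ := hg.1
    have hsP : s ∈ P := ⟨hs, t, ht, hg⟩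
    have hmem : f s ∈ f '' Icc a b :=
      mem_image_of_mem f ⟨csInf_le hPbb hsP, le_csSup hPba hsP⟩
    refine le_trans (infDist_le_dist_of_mem hmem) ?_
    rw [hg.2]
    exact hσnear t ht
  -- γ' is within 16D of σ
  have hC2 : ∀ g ∈ f '' Icc a b, infDist g (e '' Icc 0 L) ≤ 16 * D := by
    rintro g ⟨v, hv, rfl⟩
    by_cases h₁ : ∃ u ∈ P, u ≤ v
    · by_cases h₂ : ∃ u ∈ P, v ≤ u
      · obtain ⟨u₁, hu₁P, hu₁v⟩ := h₁
        obtain ⟨u₂, hu₂P, hvu₂⟩ := h₂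
        obtain ⟨hu₁M, t₁, ht₁, hproj₁⟩ := hu₁P
        obtain ⟨hu₂M, t₂, ht₂, hproj₂⟩ := hu₂P
        have hvM : v ∈ Icc (0:ℝ) M := ⟨le_trans hu₁M.1 hu₁v, le_trans hvu₂ hu₂M.2⟩
        have hd₁ : dist (e t₁) (f u₁) ≤ 4 * D := by
          rw [hproj₁.2]; exact hσnear t₁ ht₁
        have hd₂ : dist (e t₂) (f u₂) ≤ 4 * D := by
          rw [hproj₂.2]; exact hσnear t₂ ht₂
        rcases le_total t₁ t₂ with hord | hord
        · obtain ⟨hβ, -⟩ := he.sub ht₁.1 hord ht₂.2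
          obtain ⟨r, hr, hrv⟩ := chain hf hβ (by linarith)
            (by linarith : (0:ℝ) < 4 * D)
            (fun t ht => hσnear (t₁ + t)
              ⟨by linarith [ht.1, ht₁.1], by linarith [ht.2, ht₂.2]⟩)
            hvM hu₁M hu₂M hu₁v hvu₂
            (by show dist (e (t₁ + 0)) (f u₁) ≤ 4 * D
                rw [add_zero]; exact hd₁)
            (by show dist (e (t₁ + (t₂ - t₁))) (f u₂) ≤ 4 * D
                rw [show t₁ + (t₂ - t₁) = t₂ by ring]; exact hd₂)
          have hmem : e (t₁ + r) ∈ e '' Icc 0 L :=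
            mem_image_of_mem e ⟨by linarith [hr.1, ht₁.1], by linarith [hr.2, ht₂.2]⟩
          refine le_trans (infDist_le_dist_of_mem hmem) ?_
          rw [dist_comm]
          calc dist (e (t₁ + r)) (f v) ≤ 4 * (4 * D) := hrv
            _ = 16 * D := by ring
        · obtain ⟨hβ₂, -⟩ := he.sub ht₂.1 hord ht₁.2
          obtain ⟨hβ, -⟩ := hβ₂.rev (by linarith)
          obtain ⟨r, hr, hrv⟩ := chain hf hβ (by linarith)
            (by linarith : (0:ℝ) < 4 * D)
            (fun t ht => by
              show infDist (e (t₂ + (t₁ - t₂ - t))) (f '' Icc 0 M) ≤ 4 * D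
              exact hσnear _ ⟨by linarith [ht.2, ht₂.1], by linarith [ht.1, ht₁.2]⟩)
            hvM hu₁M hu₂M hu₁v hvu₂
            (by show dist (e (t₂ + (t₁ - t₂ - 0))) (f u₁) ≤ 4 * D
                rw [show t₂ + (t₁ - t₂ - 0) = t₁ by ring]; exact hd₁)
            (by show dist (e (t₂ + (t₁ - t₂ - (t₁ - t₂)))) (f u₂) ≤ 4 * D
                rw [show t₂ + (t₁ - t₂ - (t₁ - t₂)) = t₂ by ring]; exact hd₂)
          have hmem : e (t₂ + (t₁ - t₂ - r)) ∈ e '' Icc 0 L :=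
            mem_image_of_mem e ⟨by linarith [hr.2, ht₂.1], by linarith [hr.1, ht₁.2]⟩
          refine le_trans (infDist_le_dist_of_mem hmem) ?_
          rw [dist_comm]
          calc dist (e (t₂ + (t₁ - t₂ - r))) (f v) ≤ 4 * (4 * D) := hrv
            _ = 16 * D := by ring
      · -- v = b edge case
        push_neg at h₂
        have hvb : b ≤ v := csSup_le hPne fun u hu => (h₂ u hu).le
        refine le_of_forall_pos_le_add ?_
        intro ε hε
        obtain ⟨u, huP, hub⟩ := exists_lt_of_lt_csSup hPne (show b - ε < b by linarith)
        obtain ⟨huM, t, ht, hproj⟩ := huP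
        have huv : u < v := h₂ u ⟨huM, t, ht, hproj⟩
        have hub' : u ≤ b := le_csSup hPba ⟨huM, t, ht, hproj⟩
        have hvb' : v ≤ b := hv.2
        have hveq : v = b := le_antisymm hvb' hvb
        have hvM : v ∈ Icc (0:ℝ) M := ⟨le_trans huM.1 huv.le, by rw [hveq]; exact hbM⟩
        have hfvu : dist (f v) (f u) ≤ ε := by
          rw [hf v hvM u huM, abs_of_nonneg (by linarith)]
          rw [hveq] at *
          linarith
        have hfut : dist (f u) (e t) ≤ 4 * D := by
          rw [dist_comm, hproj.2]
          exact hσnear t ht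
        calc infDist (f v) (e '' Icc 0 L) ≤ dist (f v) (e t) :=
              infDist_le_dist_of_mem (mem_image_of_mem e ht)
          _ ≤ dist (f v) (f u) + dist (f u) (e t) := dist_triangle _ _ _
          _ ≤ ε + 4 * D := by linarith
          _ ≤ 16 * D + ε := by linarith
    · -- v = a edge case
      push_neg at h₁
      have hav : v ≤ a := le_csInf hPne fun u hu => (h₁ u hu).le
      refine le_of_forall_pos_le_add ?_
      intro ε hε
      obtain ⟨u, huP, hua⟩ := exists_lt_of_csInf_lt hPne (show sInf P < a + ε by
        rw [← hadef]; linarith)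
      obtain ⟨huM, t, ht, hproj⟩ := huP
      have hvu : v < u := h₁ u ⟨huM, t, ht, hproj⟩
      have hau : a ≤ u := csInf_le hPbb ⟨huM, t, ht, hproj⟩
      have hveq : v = a := le_antisymm hav hv.1
      have hvM : v ∈ Icc (0:ℝ) M := ⟨by rw [hveq]; exact ha, le_trans hvu.le huM.2⟩
      have hfvu : dist (f v) (f u) ≤ ε := by
        rw [hf v hvM u huM, abs_of_nonpos (by linarith)]
        rw [hveq] at *
        linarith
      have hfut : dist (f u) (e t) ≤ 4 * D := by
        rw [dist_comm, hproj.2]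
        exact hσnear t ht
      calc infDist (f v) (e '' Icc 0 L) ≤ dist (f v) (e t) :=
            infDist_le_dist_of_mem (mem_image_of_mem e ht)
        _ ≤ dist (f v) (f u) + dist (f u) (e t) := dist_triangle _ _ _
        _ ≤ ε + 4 * D := by linarith
        _ ≤ 16 * D + ε := by linarith
  refine ⟨?_, hnbhd⟩
  -- contraction of σ
  intro κ hκ hsd
  obtain ⟨xk, yk, k, N, hN, hk', -, -, hκeq⟩ := hκ
  subst hκeq
  have hk : IsomOn k N := hk'
  have hfarσ : ∀ t ∈ Icc (0:ℝ) N, 900 * D ≤ infDist (k t) (e '' Icc 0 L) := by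
    intro t ht
    refine le_of_lt (lt_of_lt_of_le hsd (le_infDist' hσne ?_))
    intro z hz
    rw [dist_comm]
    exact setDist_le_dist hz (mem_image_of_mem k ht)
  have hfarγ' : ∀ t ∈ Icc (0:ℝ) N, 71 * D < infDist (k t) (f '' Icc a b) := by
    intro t ht
    have h1 : infDist (k t) (e '' Icc 0 L) - 16 * D ≤ infDist (k t) (f '' Icc a b) := by
      refine le_infDist' hγ'ne ?_
      intro g hg
      have h3 := infDist_le_infDist_add_dist (x := k t) (y := g) (s := e '' Icc 0 L)
      linarith [hC2 g hg]
    linarith [hfarσ t ht]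
  have hdiam : diam (projSet (e '' Icc 0 L) (k '' Icc 0 N)) ≤ 812 * D := by
    refine diam_le_of_forall_dist_le (by linarith) ?_
    intro p hp q hq
    rcases mem_iUnion₂.1 hp with ⟨w, hw, hpw⟩
    rcases mem_iUnion₂.1 hq with ⟨z, hz, hqz⟩
    obtain ⟨t₁, ht₁, rfl⟩ := hw
    obtain ⟨t₂, ht₂, rfl⟩ := hz
    obtain ⟨α₁, hα₁⟩ := proj_nonempty hγ'c hγ'ne (k t₁)
    obtain ⟨α₂, hα₂⟩ := proj_nonempty hγ'c hγ'ne (k t₂)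
    have hb1 := near_transfer hX hD hf hcontrγ ha hab hbM hC1 hC2 hpw hα₁
    have hb2 := near_transfer hX hD hf hcontrγ ha hab hbM hC1 hC2 hqz hα₂
    have hb3 := subseg_proj_bound hX hD hf hcontrγ ha hab hbM hk hN hfarγ' ht₁ ht₂ hα₁ hα₂
    calc dist p q ≤ dist p α₁ + dist α₁ α₂ + dist α₂ q := dist_triangle4 _ _ _ _
      _ ≤ 371 * D + 70 * D + 371 * D := by
          rw [dist_comm α₂ q]
          linarith [hb1, hb2, hb3]
      _ ≤ 812 * D := by linarith
  exact lt_of_le_of_lt hdiam (by linarith)
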